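/- There exists a constant C > 0 such that for all smooth compactly supported u : ℝ² → ℝ, ‖u‖_{L^∞(ℝ²)} ≤ C ( ‖u‖_{L²(ℝ²)} + ‖∂_x u‖_{L²(ℝ²)} + ‖∂_y u‖_{L^∞(ℝ²)} ). -/

import Mathlib

open MeasureTheory ENNReal

/-- Partial derivative in the second variable. -/
noncomputable def pdy (u : ℝ × ℝ → ℝ) : ℝ × ℝ → ℝ :=
  fun p => deriv (fun y => u (p.1, y)) p.2

/-- Partial derivative in the first variable. -/
noncomputable def pdx (u : ℝ × ℝ → ℝ) : ℝ × ℝ → ℝ :=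
  fun p => deriv (fun x => u (x, p.2)) p.1


lemma sliceX_cs {u : ℝ × ℝ → ℝ} (hs : HasCompactSupport u) (y : ℝ) :
    HasCompactSupport (fun x => u (x, y)) := by
  apply HasCompactSupport.intro (hs.isCompact.image continuous_fst)
  intro x hx
  by_contra h
  exact hx ⟨(x, y), subset_tsupport u h, rfl⟩

lemma pdx_hasDeriv {u : ℝ × ℝ → ℝ} (hu : ContDiff ℝ (⊤ : ℕ∞) u) (p : ℝ × ℝ) :
    HasDerivAt (fun x => u (x, p.2)) (fderiv ℝ u p ((1 : ℝ), (0 : ℝ))) p.1 := by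
  have h1 : HasDerivAt (fun x : ℝ => (x, p.2)) ((1 : ℝ), (0 : ℝ)) p.1 :=
    HasDerivAt.prodMk (hasDerivAt_id p.1) (hasDerivAt_const p.1 p.2)
  have h2 := (hu.differentiable (by simp) (p.1, p.2)).hasFDerivAt
  rw [Prod.mk.eta] at h2
  exact h2.comp_hasDerivAt p.1 h1

lemma pdy_hasDeriv {u : ℝ × ℝ → ℝ} (hu : ContDiff ℝ (⊤ : ℕ∞) u) (p : ℝ × ℝ) :
    HasDerivAt (fun y => u (p.1, y)) (fderiv ℝ u p ((0 : ℝ), (1 : ℝ))) p.2 := by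
  have h1 : HasDerivAt (fun y : ℝ => (p.1, y)) ((0 : ℝ), (1 : ℝ)) p.2 :=
    HasDerivAt.prodMk (hasDerivAt_const p.2 p.1) (hasDerivAt_id p.2)
  have h2 := (hu.differentiable (by simp) (p.1, p.2)).hasFDerivAt
  rw [Prod.mk.eta] at h2
  exact h2.comp_hasDerivAt p.2 h1

lemma pdx_eq {u : ℝ × ℝ → ℝ} (hu : ContDiff ℝ (⊤ : ℕ∞) u) :
    pdx u = fun p => fderiv ℝ u p ((1 : ℝ), (0 : ℝ)) :=
  funext fun p => (pdx_hasDeriv hu p).deriv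

lemma pdy_eq {u : ℝ × ℝ → ℝ} (hu : ContDiff ℝ (⊤ : ℕ∞) u) :
    pdy u = fun p => fderiv ℝ u p ((0 : ℝ), (1 : ℝ)) :=
  funext fun p => (pdy_hasDeriv hu p).deriv

lemma pdx_cont {u : ℝ × ℝ → ℝ} (hu : ContDiff ℝ (⊤ : ℕ∞) u) : Continuous (pdx u) := by
  rw [pdx_eq hu]
  exact (hu.continuous_fderiv (by simp)).clm_apply continuous_const

lemma pdy_cont {u : ℝ × ℝ → ℝ} (hu : ContDiff ℝ (⊤ : ℕ∞) u) : Continuous (pdy u) := by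
  rw [pdy_eq hu]
  exact (hu.continuous_fderiv (by simp)).clm_apply continuous_const

lemma pdx_cs {u : ℝ × ℝ → ℝ} (hu : ContDiff ℝ (⊤ : ℕ∞) u) (hs : HasCompactSupport u) :
    HasCompactSupport (pdx u) := by
  rw [pdx_eq hu]; exact hs.fderiv_apply ℝ ((1:ℝ),(0:ℝ))

lemma pdy_cs {u : ℝ × ℝ → ℝ} (hu : ContDiff ℝ (⊤ : ℕ∞) u) (hs : HasCompactSupport u) :
    HasCompactSupport (pdy u) := by
  rw [pdy_eq hu]; exact hs.fderiv_apply ℝ ((0:ℝ),(1:ℝ))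

lemma cont_bound {g : ℝ × ℝ → ℝ} (hg : Continuous g) {D : ℝ}
    (h : ∀ᵐ p : ℝ × ℝ, |g p| ≤ D) : ∀ p, |g p| ≤ D := by
  by_contra hc
  push_neg at hc
  obtain ⟨p, hp⟩ := hc
  have hopen : IsOpen {q : ℝ × ℝ | D < |g q|} := isOpen_lt continuous_const hg.abs
  have hpos : (0 : ℝ≥0∞) < volume {q : ℝ × ℝ | D < |g q|} :=
    hopen.measure_pos volume ⟨p, hp⟩
  have : volume {q : ℝ × ℝ | D < |g q|} = 0 := by
    have h2 := ae_iff.mp h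
    simpa [not_le] using h2
  simp [this] at hpos

lemma oneD {f : ℝ → ℝ} (hf : ContDiff ℝ (⊤ : ℕ∞) f) (hs : HasCompactSupport f) (x : ℝ) :
    f x ^ 2 ≤ ∫ t, (f t ^ 2 + deriv f t ^ 2) := by
  set g : ℝ → ℝ := fun t => f t ^ 2 with hgdef
  have hg : ContDiff ℝ 1 g := (hf.pow 2).of_le (by simp)
  have hgs : HasCompactSupport g := hs.comp_left (g := fun z : ℝ => z ^ 2) (by norm_num)
  have key := hgs.integral_Iic_deriv_eq hg x
  have hderiv : ∀ t, deriv g t = 2 * f t * deriv f t := by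
    intro t
    have h1 : HasDerivAt f (deriv f t) t := (hf.differentiable (by simp) t).hasDerivAt
    have := h1.pow 2
    have e : deriv g t = deriv (f ^ 2) t := rfl
    rw [e]
    simpa [mul_comm] using this.deriv
  have hcderiv : Continuous (deriv f) := hf.continuous_deriv (by simp)
  have hhcont : Continuous (fun t => f t ^ 2 + deriv f t ^ 2) :=
    ((hf.continuous.pow 2).add (hcderiv.pow 2))
  have hhsupp : HasCompactSupport (fun t => f t ^ 2 + deriv f t ^ 2) := by
    exact (hs.comp_left (g := fun z : ℝ => z ^ 2) (by norm_num)).add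
      (hs.deriv.comp_left (g := fun z : ℝ => z ^ 2) (by norm_num))
  have hhint : Integrable (fun t => f t ^ 2 + deriv f t ^ 2) :=
    hhcont.integrable_of_hasCompactSupport hhsupp
  have hgdint : Integrable (deriv g) :=
    (hg.continuous_deriv le_rfl).integrable_of_hasCompactSupport hgs.deriv
  calc f x ^ 2 = ∫ t in Set.Iic x, deriv g t := key.symm
    _ ≤ ∫ t in Set.Iic x, (f t ^ 2 + deriv f t ^ 2) := by
        apply setIntegral_mono hgdint.integrableOn hhint.integrableOn
        intro t
        rw [hderiv t]
        show _ ≤ f t ^ 2 + deriv f t ^ 2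
        nlinarith [sq_nonneg (f t - deriv f t)]
    _ ≤ ∫ t, (f t ^ 2 + deriv f t ^ 2) :=
        setIntegral_le_integral hhint (ae_of_all _ fun t => by positivity)
/-- Anisotropic embedding: ‖u‖_{L^∞} ≤ C(‖u‖_{L²} + ‖∂ₓu‖_{L²} + ‖∂_yu‖_{L^∞})
for smooth compactly supported u on ℝ². -/
theorem stmt_8 :
    ∃ C : ℝ, 0 < C ∧
      ∀ u : ℝ × ℝ → ℝ, ContDiff ℝ (⊤ : ℕ∞) u → HasCompactSupport u →
        eLpNorm u ⊤ (volume : Measure (ℝ × ℝ)) ≤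
          ENNReal.ofReal C *
            (eLpNorm u 2 (volume : Measure (ℝ × ℝ)) +
             eLpNorm (pdx u) 2 (volume : Measure (ℝ × ℝ)) +
             eLpNorm (pdy u) ⊤ (volume : Measure (ℝ × ℝ))) := by
  refine ⟨1, one_pos, fun u hu hs => ?_⟩
  rw [ENNReal.ofReal_one, one_mul]
  by_cases hDtop : eLpNorm (pdy u) ⊤ (volume : Measure (ℝ × ℝ)) = ⊤
  · rw [hDtop]
    simp
  have hucont : Continuous u := hu.continuous
  have hpdxc := pdx_cont hu
  have hpdxs := pdx_cs hu hs
  set D : ℝ := (eLpNorm (pdy u) ⊤ (volume : Measure (ℝ × ℝ))).toReal with hDdef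
  have hD0 : 0 ≤ D := ENNReal.toReal_nonneg
  have hDb : ∀ p, |pdy u p| ≤ D := by
    apply cont_bound (pdy_cont hu)
    have hESS : eLpNormEssSup (pdy u) (volume : Measure (ℝ × ℝ)) ≠ ⊤ := by
      rwa [← eLpNorm_exponent_top]
    filter_upwards [ae_le_eLpNormEssSup (f := pdy u) (μ := (volume : Measure (ℝ × ℝ)))]
      with p hp
    have h3 := ENNReal.toReal_mono hESS hp
    simp only [toReal_enorm, Real.norm_eq_abs] at h3
    simpa [hDdef, eLpNorm_exponent_top] using h3
  set G : ℝ × ℝ → ℝ := fun p => u p ^ 2 + pdx u p ^ 2 with hGdef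
  have hGc : Continuous G := (hucont.pow 2).add (hpdxc.pow 2)
  have hGs : HasCompactSupport G :=
    (hs.comp_left (g := fun z : ℝ => z ^ 2) (by norm_num)).add
      (hpdxs.comp_left (g := fun z : ℝ => z ^ 2) (by norm_num))
  have hGint : Integrable G (volume : Measure (ℝ × ℝ)) :=
    hGc.integrable_of_hasCompactSupport hGs
  have hGint' : Integrable G ((volume : Measure ℝ).prod volume) := by
    rwa [← Measure.volume_eq_prod]
  set F : ℝ → ℝ := fun y => ∫ x, G (x, y) with hFdef
  have hFint : Integrable F := hGint'.integral_prod_right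
  have hFnn : ∀ y, 0 ≤ F y := fun y => integral_nonneg fun x => by positivity
  have hFtot : ∫ y, F y = ∫ p, G p := by
    rw [Measure.volume_eq_prod]
    exact (integral_prod_symm G hGint').symm
  set a : ℝ := ∫ p : ℝ × ℝ, u p ^ 2 with hadef
  set b : ℝ := ∫ p : ℝ × ℝ, pdx u p ^ 2 with hbdef
  have haint : Integrable (fun p : ℝ × ℝ => u p ^ 2) :=
    (hucont.pow 2).integrable_of_hasCompactSupport
      (hs.comp_left (g := fun z : ℝ => z ^ 2) (by norm_num) :)
  have hbint : Integrable (fun p : ℝ × ℝ => pdx u p ^ 2) :=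
    (hpdxc.pow 2).integrable_of_hasCompactSupport
      (hpdxs.comp_left (g := fun z : ℝ => z ^ 2) (by norm_num) :)
  have hGsplit : ∫ p : ℝ × ℝ, G p = a + b := integral_add haint hbint
  have ha0 : 0 ≤ a := integral_nonneg fun p => by positivity
  have hb0 : 0 ≤ b := integral_nonneg fun p => by positivity
  have hslice : ∀ x y : ℝ, u (x, y) ^ 2 ≤ F y := by
    intro x y
    have hcd : ContDiff ℝ (⊤ : ℕ∞) (fun x => u (x, y)) :=
      hu.comp (contDiff_id.prodMk contDiff_const)
    have h := oneD hcd (sliceX_cs hs y) x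
    simpa [hFdef, hGdef, pdx] using h
  have hpoint : ∀ p : ℝ × ℝ, |u p| ≤ Real.sqrt a + Real.sqrt b + D := by
    rintro ⟨x₀, y₀⟩
    by_cases hMD : |u (x₀, y₀)| ≤ D
    · have := Real.sqrt_nonneg a
      have := Real.sqrt_nonneg b
      linarith
    push_neg at hMD
    set M : ℝ := |u (x₀, y₀)| with hMdef
    have hlip : ∀ y : ℝ, |u (x₀, y₀) - u (x₀, y)| ≤ D * |y₀ - y| := by
      intro y
      have hdiff : ∀ z ∈ (Set.univ : Set ℝ), DifferentiableAt ℝ (fun y => u (x₀, y)) z :=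
        fun z _ => (pdy_hasDeriv hu (x₀, z)).differentiableAt
      have hbound : ∀ z ∈ (Set.univ : Set ℝ), ‖deriv (fun y => u (x₀, y)) z‖ ≤ D := by
        intro z _
        have := hDb (x₀, z)
        simpa [pdy, Real.norm_eq_abs] using this
      have h := convex_univ.norm_image_sub_le_of_norm_deriv_le hdiff hbound
        (Set.mem_univ y) (Set.mem_univ y₀)
      simpa [Real.norm_eq_abs] using h
    have hIcc : ∀ y ∈ Set.Icc y₀ (y₀ + 1), (M - D) ^ 2 ≤ F y := by
      intro y hy
      have h1 : |y₀ - y| ≤ 1 := by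
        rw [abs_of_nonpos (by linarith [hy.1])]
        linarith [hy.2]
      have h2 : M - D ≤ |u (x₀, y)| := by
        have h3 := hlip y
        have h4 : D * |y₀ - y| ≤ D := by nlinarith [abs_nonneg (y₀ - y)]
        have h5 : M - |u (x₀, y)| ≤ |u (x₀, y₀) - u (x₀, y)| :=
          abs_sub_abs_le_abs_sub _ _
        linarith
      have h6 : (M - D) ^ 2 ≤ u (x₀, y) ^ 2 := by
        have hMD' : 0 ≤ M - D := by linarith
        calc (M - D) ^ 2 ≤ |u (x₀, y)| ^ 2 := pow_le_pow_left₀ hMD' h2 2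
          _ = u (x₀, y) ^ 2 := sq_abs _
      exact h6.trans (hslice x₀ y)
    have h7 : (M - D) ^ 2 ≤ a + b := by
      have e1 : (∫ y in y₀..(y₀ + 1), (M - D) ^ 2) = (M - D) ^ 2 := by simp
      have h8 : (∫ y in y₀..(y₀ + 1), (M - D) ^ 2) ≤ ∫ y in y₀..(y₀ + 1), F y :=
        intervalIntegral.integral_mono_on (by linarith) intervalIntegrable_const
          hFint.intervalIntegrable hIcc
      have h9 : (∫ y in y₀..(y₀ + 1), F y) ≤ ∫ y, F y := by
        rw [intervalIntegral.integral_of_le (by linarith)]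
        exact setIntegral_le_integral hFint (ae_of_all _ hFnn)
      calc (M - D) ^ 2 = ∫ y in y₀..(y₀ + 1), (M - D) ^ 2 := e1.symm
        _ ≤ ∫ y in y₀..(y₀ + 1), F y := h8
        _ ≤ ∫ y, F y := h9
        _ = a + b := by rw [hFtot, hGsplit]
    have h10 : M - D ≤ Real.sqrt (a + b) := by
      have h := Real.sqrt_le_sqrt h7
      rwa [Real.sqrt_sq (by linarith)] at h
    have h11 : Real.sqrt (a + b) ≤ Real.sqrt a + Real.sqrt b := by
      have h12 : a + b ≤ (Real.sqrt a + Real.sqrt b) ^ 2 := by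
        nlinarith [Real.sq_sqrt ha0, Real.sq_sqrt hb0, Real.sqrt_nonneg a, Real.sqrt_nonneg b]
      calc Real.sqrt (a + b) ≤ Real.sqrt ((Real.sqrt a + Real.sqrt b) ^ 2) :=
            Real.sqrt_le_sqrt h12
        _ = Real.sqrt a + Real.sqrt b := Real.sqrt_sq (by positivity)
    linarith
  have hmain : eLpNorm u ⊤ (volume : Measure (ℝ × ℝ)) ≤
      ENNReal.ofReal (Real.sqrt a + Real.sqrt b + D) := by
    rw [eLpNorm_exponent_top]
    exact eLpNormEssSup_le_of_ae_bound (ae_of_all _ fun p => by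
      simpa [Real.norm_eq_abs] using hpoint p)
  have l2eq : ∀ (f : ℝ × ℝ → ℝ), Continuous f → HasCompactSupport f →
      ENNReal.ofReal (Real.sqrt (∫ p : ℝ × ℝ, f p ^ 2)) =
        eLpNorm f 2 (volume : Measure (ℝ × ℝ)) := by
    intro f hfc hfs
    have hm : MemLp f 2 (volume : Measure (ℝ × ℝ)) := hfc.memLp_of_hasCompactSupport hfs
    rw [hm.eLpNorm_eq_integral_rpow_norm two_ne_zero ENNReal.ofNat_ne_top]
    congr 1
    have hint_eq : (∫ p : ℝ × ℝ, ‖f p‖ ^ (2 : ℝ≥0∞).toReal) = ∫ p : ℝ × ℝ, f p ^ 2 := by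
      congr 1
      funext p
      rw [ENNReal.toReal_ofNat]
      rw [show (2 : ℝ) = ((2 : ℕ) : ℝ) by norm_num, Real.rpow_natCast,
        Real.norm_eq_abs, sq_abs]
    rw [hint_eq, Real.sqrt_eq_rpow]
    norm_num
  calc eLpNorm u ⊤ (volume : Measure (ℝ × ℝ))
      ≤ ENNReal.ofReal (Real.sqrt a + Real.sqrt b + D) := hmain
    _ = ENNReal.ofReal (Real.sqrt a) + ENNReal.ofReal (Real.sqrt b) +
        ENNReal.ofReal D := by
      rw [ENNReal.ofReal_add (by positivity) hD0,
        ENNReal.ofReal_add (by positivity) (Real.sqrt_nonneg b)]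
    _ = eLpNorm u 2 (volume : Measure (ℝ × ℝ)) +
        eLpNorm (pdx u) 2 (volume : Measure (ℝ × ℝ)) +
        eLpNorm (pdy u) ⊤ (volume : Measure (ℝ × ℝ)) := by
      rw [l2eq u hucont hs, l2eq (pdx u) hpdxc hpdxs, hDdef, ENNReal.ofReal_toReal hDtop]
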